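/- arXiv:1811.03472 — 13 statements merged into one kernel-verified Lean document; each statement's English description precedes it below -/
import Mathlib

section
/- Let w ∈ (0,1), let m be a positive real number, let n ≥ 1 be a natural number, and let d₂ > 0. Let M_w be the 2×2 real matrix [[1,w],[w,w]] and V the 2×2 matrix [[1,1/2],[1/2,1/3]]. Then the limit, as d₁ → 0⁺, of (1/m)·[tr(M_w⁻¹ V) + (n−1)·tr((M_w + (m·diag(d₁,d₂))⁻¹)⁻¹ V)] exists and equals (1/3)·( 1/(m·w·(1−w)) + (n−1)·d₂/(1 + m·w·d₂) ). -/
/-- Straight line regression on [0,1]: limit of the IMSE-criterion as the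
intercept variance d₁ → 0⁺. -/
theorem stmt_0 (w m : ℝ) (hw : w ∈ Set.Ioo (0:ℝ) 1) (hm : 0 < m)
    (n : ℕ) (hn : 1 ≤ n) (d₂ : ℝ) (hd₂ : 0 < d₂) :
    Filter.Tendsto
      (fun d₁ : ℝ =>
        (1 / m) *
          (((!![1, w; w, w] : Matrix (Fin 2) (Fin 2) ℝ)⁻¹ *
              (!![1, 1/2; 1/2, 1/3] : Matrix (Fin 2) (Fin 2) ℝ)).trace +
            ((n : ℝ) - 1) *
              ((((!![1, w; w, w] : Matrix (Fin 2) (Fin 2) ℝ) +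
                  (m • Matrix.diagonal ![d₁, d₂])⁻¹)⁻¹ *
                (!![1, 1/2; 1/2, 1/3] : Matrix (Fin 2) (Fin 2) ℝ)).trace)))
      (nhdsWithin 0 (Set.Ioi 0))
      (nhds ((1/3) * (1 / (m * w * (1 - w)) +
        ((n : ℝ) - 1) * d₂ / (1 + m * w * d₂)))) := by
  obtain ⟨hw0, hw1⟩ := hw
  have h1w : (0:ℝ) < 1 - w := by linarith
  have hww : (0:ℝ) < w * (1 - w) := mul_pos hw0 h1w
  have hb : (0:ℝ) < w + 1/(m*d₂) := by positivity
  set g : ℝ → ℝ := fun d₁ => (1/m) * (1/(3*w*(1-w)) +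
    ((n:ℝ)-1) * ((m*d₁*(1/(m*d₂)+1/3) + 1/3) /
      (m*d₁*(w + 1/(m*d₂) - w^2) + (w + 1/(m*d₂))))) with hg
  -- first trace
  have hT1 : ((!![1, w; w, w] : Matrix (Fin 2) (Fin 2) ℝ)⁻¹ *
      !![1, 1/2; 1/2, 1/3]).trace = 1/(3*w*(1-w)) := by
    rw [Matrix.inv_def, Ring.inverse_eq_inv', Matrix.adjugate_fin_two_of,
      Matrix.det_fin_two_of, smul_mul_assoc, Matrix.trace_smul,
      Matrix.mul_fin_two, Matrix.trace_fin_two_of, smul_eq_mul]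
    have h0 : (1*w - w*w : ℝ) ≠ 0 := by
      have : (1*w - w*w : ℝ) = w*(1-w) := by ring
      rw [this]; exact ne_of_gt hww
    rw [eq_div_iff (by positivity : (3*w*(1-w) : ℝ) ≠ 0), inv_mul_eq_div,
      div_mul_eq_mul_div, div_eq_iff h0]
    ring
  -- eventual equality
  have heq : ∀ d₁ ∈ Set.Ioi (0:ℝ),
      (1 / m) *
          (((!![1, w; w, w] : Matrix (Fin 2) (Fin 2) ℝ)⁻¹ *
              (!![1, 1/2; 1/2, 1/3] : Matrix (Fin 2) (Fin 2) ℝ)).trace +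
            ((n : ℝ) - 1) *
              ((((!![1, w; w, w] : Matrix (Fin 2) (Fin 2) ℝ) +
                  (m • Matrix.diagonal ![d₁, d₂])⁻¹)⁻¹ *
                (!![1, 1/2; 1/2, 1/3] : Matrix (Fin 2) (Fin 2) ℝ)).trace)) = g d₁ := by
    intro d₁ hd₁
    have hd₁' : (0:ℝ) < d₁ := hd₁
    have hmd₁ : m * d₁ ≠ 0 := by positivity
    have hmd₂ : m * d₂ ≠ 0 := by positivity
    have hdiag : (m • Matrix.diagonal ![d₁, d₂] : Matrix (Fin 2) (Fin 2) ℝ)⁻¹ =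
        !![(m*d₁)⁻¹, 0; 0, (m*d₂)⁻¹] := by
      apply Matrix.inv_eq_right_inv
      have h : (m • Matrix.diagonal ![d₁, d₂] : Matrix (Fin 2) (Fin 2) ℝ)
          = !![m*d₁, 0; 0, m*d₂] := by
        ext i j; fin_cases i <;> fin_cases j <;> simp [Matrix.diagonal]
      rw [h, Matrix.mul_fin_two, Matrix.one_fin_two,
        mul_inv_cancel₀ hmd₁, mul_inv_cancel₀ hmd₂]
      norm_num
    have hsum : (!![1, w; w, w] : Matrix (Fin 2) (Fin 2) ℝ) + !![(m*d₁)⁻¹, 0; 0, (m*d₂)⁻¹]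
        = !![1 + (m*d₁)⁻¹, w; w, w + (m*d₂)⁻¹] := by
      ext i j; fin_cases i <;> fin_cases j <;> simp
    have hdetpos : (0:ℝ) < (1 + (m*d₁)⁻¹) * (w + (m*d₂)⁻¹) - w * w := by
      have h1 : (1 + (m*d₁)⁻¹) * (w + (m*d₂)⁻¹) - w * w
          = w*(1-w) + (m*d₂)⁻¹ + (m*d₁)⁻¹ * (w + (m*d₂)⁻¹) := by ring
      rw [h1]
      have : (0:ℝ) < (m*d₂)⁻¹ := by positivity
      have h2 : (0:ℝ) < (m*d₁)⁻¹ * (w + (m*d₂)⁻¹) := by positivity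
      linarith
    have hDpos : (0:ℝ) < m*d₁*(w + 1/(m*d₂) - w^2) + (w + 1/(m*d₂)) := by
      have h1 : m*d₁*(w + 1/(m*d₂) - w^2) + (w + 1/(m*d₂))
          = m*d₁*(w*(1-w) + 1/(m*d₂)) + (w + 1/(m*d₂)) := by ring
      rw [h1]
      have : (0:ℝ) < m*d₁*(w*(1-w) + 1/(m*d₂)) := by positivity
      linarith
    have hT2 : ((1 + (m*d₁)⁻¹) * (w + (m*d₂)⁻¹) - w*w)⁻¹ *
        ((w + (m*d₂)⁻¹)*1 + -w*(1/2) + (-w*(1/2) + (1+(m*d₁)⁻¹)*(1/3)))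
        = (m*d₁*(1/(m*d₂)+1/3) + 1/3) /
          (m*d₁*(w + 1/(m*d₂) - w^2) + (w + 1/(m*d₂))) := by
      rw [inv_mul_eq_div, div_eq_div_iff (ne_of_gt hdetpos) (ne_of_gt hDpos)]
      field_simp
      ring
    rw [hT1, hdiag, hsum, Matrix.inv_def, Ring.inverse_eq_inv',
      Matrix.adjugate_fin_two_of, Matrix.det_fin_two_of, smul_mul_assoc,
      Matrix.trace_smul, Matrix.mul_fin_two, Matrix.trace_fin_two_of,
      smul_eq_mul, hT2, hg]
  -- continuity of g at 0
  have hD0 : (fun d₁ : ℝ => m*d₁*(w + 1/(m*d₂) - w^2) + (w + 1/(m*d₂))) 0 ≠ 0 := by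
    simp only [mul_zero, zero_mul]
    simpa using ne_of_gt hb
  have hcN : Continuous fun d₁ : ℝ => m*d₁*(1/(m*d₂)+1/3) + 1/3 :=
    (((continuous_const.mul continuous_id).mul continuous_const).add continuous_const)
  have hcD : Continuous fun d₁ : ℝ => m*d₁*(w + 1/(m*d₂) - w^2) + (w + 1/(m*d₂)) :=
    (((continuous_const.mul continuous_id).mul continuous_const).add continuous_const)
  have hcont : ContinuousAt g 0 := by
    rw [hg]
    exact continuousAt_const.mul (continuousAt_const.add
      (continuousAt_const.mul (hcN.continuousAt.div hcD.continuousAt hD0)))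
  have hg0 : g 0 = (1/3) * (1 / (m * w * (1 - w)) +
      ((n : ℝ) - 1) * d₂ / (1 + m * w * d₂)) := by
    rw [hg]
    simp only [mul_zero, zero_mul]
    have h1 : (1 + m*w*d₂ : ℝ) ≠ 0 := by positivity
    have h2 : (m*d₂ : ℝ) ≠ 0 := by positivity
    have h3 : (w*(1-w) : ℝ) ≠ 0 := ne_of_gt hww
    have h4 : (w + 1/(m*d₂) : ℝ) ≠ 0 := ne_of_gt hb
    field_simp
    ring
  have hlim : Filter.Tendsto g (nhdsWithin 0 (Set.Ioi 0)) (nhds (g 0)) :=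
    (hcont.tendsto).mono_left nhdsWithin_le_nhds
  rw [hg0] at hlim
  exact Filter.Tendsto.congr' (Filter.eventuallyEq_of_mem self_mem_nhdsWithin
    (fun d₁ hd₁ => (heq d₁ hd₁).symm)) hlim
end

section
/- Let n ≥ 2 be a natural number and define g : (0,1) → ℝ by g(w) = 1/(w(1−w)) + (n−1)/w. Then w* = (n − √n)/(n−1) lies in (0,1) and is the unique minimizer of g on (0,1); that is, g(w*) < g(w) for every w ∈ (0,1) with w ≠ w*. -/
/-- Straight line regression: (n - √n)/(n-1) is the unique minimizer on (0,1)
of g(w) = 1/(w(1-w)) + (n-1)/w. -/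
theorem stmt_1 (n : ℕ) (hn : 2 ≤ n) :
    ((n : ℝ) - Real.sqrt n) / ((n : ℝ) - 1) ∈ Set.Ioo (0:ℝ) 1 ∧
    ∀ w ∈ Set.Ioo (0:ℝ) 1, w ≠ ((n : ℝ) - Real.sqrt n) / ((n : ℝ) - 1) →
      (fun w : ℝ => 1 / (w * (1 - w)) + ((n : ℝ) - 1) / w)
          (((n : ℝ) - Real.sqrt n) / ((n : ℝ) - 1)) <
        (fun w : ℝ => 1 / (w * (1 - w)) + ((n : ℝ) - 1) / w) w := by
  set s := Real.sqrt n with hs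
  have hn2 : (2:ℝ) ≤ (n:ℝ) := by exact_mod_cast hn
  have hs0 : 0 ≤ s := Real.sqrt_nonneg _
  have hs2 : s ^ 2 = (n:ℝ) := Real.sq_sqrt (by positivity)
  have hs1 : 1 < s := by nlinarith
  have hstar : ((n:ℝ) - s) / ((n:ℝ) - 1) = s / (s + 1) := by
    rw [div_eq_div_iff (by linarith) (by linarith)]
    linear_combination -hs2
  rw [hstar]
  constructor
  · constructor
    · positivity
    · rw [div_lt_one (by linarith)]; linarith
  · rintro w ⟨hw0, hw1⟩ hne
    simp only []
    have h1w : 0 < 1 - w := by linarith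
    have hne' : (s + 1) * w - s ≠ 0 := by
      intro h
      apply hne
      field_simp
      linarith
    have key1 : 1 / ((s/(s+1)) * (1 - s/(s+1))) + ((n:ℝ) - 1) / (s/(s+1))
        = (s + 1) ^ 2 := by
      rw [← hs2]
      field_simp
      ring
    have key2 : 1 / (w * (1 - w)) + ((n:ℝ) - 1) / w
        = (s + 1) ^ 2 + ((s + 1) * w - s) ^ 2 / (w * (1 - w)) := by
      rw [← hs2]
      field_simp
      ring
    rw [key1, key2]
    have hpos : 0 < ((s + 1) * w - s) ^ 2 / (w * (1 - w)) :=
      div_pos (by positivity) (by positivity)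
    linarith
end

section
/- Let n ≥ 2 be a natural number and for c > 0 define h_c : (0,1) → ℝ by h_c(w) = 1/(w(1−w)) + (n−1)·c/(1 + w·c), and let w* = (n − √n)/(n−1). Then lim_{c→∞} ( inf_{w∈(0,1)} h_c(w) ) / h_c(w*) = 1. -/
open Filter Set

set_option maxHeartbeats 1000000 in
/-- Efficiency of the minimax-optimal design w* = (n-√n)/(n-1) tends to 1 as
c = m·d₂ → ∞, where h_c(w) = 1/(w(1-w)) + (n-1)c/(1+wc). -/
theorem stmt_3 (n : ℕ) (hn : 2 ≤ n) :
    Filter.Tendsto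
      (fun c : ℝ =>
        (⨅ w : Set.Ioo (0:ℝ) 1,
            (1 / ((w : ℝ) * (1 - (w : ℝ))) + ((n : ℝ) - 1) * c / (1 + (w : ℝ) * c))) /
          (1 / ((((n : ℝ) - Real.sqrt n) / ((n : ℝ) - 1)) *
              (1 - ((n : ℝ) - Real.sqrt n) / ((n : ℝ) - 1))) +
            ((n : ℝ) - 1) * c /
              (1 + (((n : ℝ) - Real.sqrt n) / ((n : ℝ) - 1)) * c)))
      Filter.atTop (nhds 1) := by
  haveI : Nonempty (Set.Ioo (0:ℝ) 1) := ⟨⟨1/2, by norm_num⟩⟩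
  have hn2 : (2:ℝ) ≤ (n:ℝ) := by exact_mod_cast hn
  set s := Real.sqrt (n:ℝ) with hsdef
  have hs2 : s ^ 2 = (n:ℝ) := Real.sq_sqrt (by positivity)
  have hsnn : 0 ≤ s := Real.sqrt_nonneg _
  have hs1 : 1 < s := by nlinarith
  have hn' : (n:ℝ) = s ^ 2 := hs2.symm
  have hn1 : (1:ℝ) ≤ (n:ℝ) - 1 := by linarith
  set W := ((n:ℝ) - s) / ((n:ℝ) - 1) with hWdef
  have hWs : W = s / (s + 1) := by
    rw [hWdef, hn', div_eq_div_iff (by nlinarith) (by nlinarith)]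
    ring
  have hW0 : 0 < W := by rw [hWs]; exact div_pos (by linarith) (by linarith)
  have hW1 : W < 1 := by rw [hWs, div_lt_one (by linarith)]; linarith
  have hWmem : W ∈ Set.Ioo (0:ℝ) 1 := ⟨hW0, hW1⟩
  -- the limiting minimum value
  have hGid : 1 / (W * (1 - W)) + ((n:ℝ) - 1) / W = (s + 1) ^ 2 := by
    rw [hWs, hn']
    have h1 : s ≠ 0 := by linarith
    have h2 : s + 1 ≠ 0 := by linarith
    field_simp
    ring
  -- lower bound for the limiting function
  have gLB : ∀ w : ℝ, w ∈ Set.Ioo (0:ℝ) 1 →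
      (s + 1) ^ 2 ≤ 1 / (w * (1 - w)) + ((n:ℝ) - 1) / w := by
    intro w hw
    obtain ⟨hw0, hw1⟩ := hw
    have hww : 0 < w * (1 - w) := by nlinarith
    have e : 1 / (w * (1 - w)) + ((n:ℝ) - 1) / w
        = (1 + ((n:ℝ) - 1) * (1 - w)) / (w * (1 - w)) := by
      field_simp
    rw [e, le_div_iff₀ hww, hn']
    nlinarith [sq_nonneg ((s + 1) * w - s)]
  -- positivity of h_c(w)
  have hpos : ∀ c : ℝ, 0 < c → ∀ w : ℝ, w ∈ Set.Ioo (0:ℝ) 1 →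
      0 < 1 / (w * (1 - w)) + ((n:ℝ) - 1) * c / (1 + w * c) := by
    intro c hc w hw
    obtain ⟨hw0, hw1⟩ := hw
    have h1 : 0 < w * (1 - w) := by nlinarith
    have h2 : 0 < 1 + w * c := by nlinarith
    have h3 : 0 ≤ ((n:ℝ) - 1) * c / (1 + w * c) :=
      div_nonneg (mul_nonneg (by linarith) hc.le) h2.le
    have h4 : 0 < 1 / (w * (1 - w)) := by positivity
    linarith
  -- uniform lower bound on h_c
  have hlow : ∀ c : ℝ, 0 < c → ∀ w : ℝ, w ∈ Set.Ioo (0:ℝ) 1 →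
      (s + 1) ^ 2 - ((n:ℝ) - 1) * (s + 1) ^ 4 / c ≤
        1 / (w * (1 - w)) + ((n:ℝ) - 1) * c / (1 + w * c) := by
    intro c hc w hw
    obtain ⟨hw0, hw1⟩ := hw
    have hww : 0 < w * (1 - w) := by nlinarith
    have h1wc : 0 < 1 + w * c := by nlinarith
    have hKc : 0 ≤ ((n:ℝ) - 1) * (s + 1) ^ 4 / c :=
      div_nonneg (mul_nonneg (by linarith) (by positivity)) hc.le
    have hG : (0:ℝ) < (s + 1) ^ 2 := by positivity
    by_cases hcase : w ≤ ((s + 1) ^ 2)⁻¹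
    · have hGw : (s + 1) ^ 2 ≤ 1 / w := by
        rw [le_div_iff₀ hw0]
        have hcan : (s + 1) ^ 2 * ((s + 1) ^ 2)⁻¹ = 1 := mul_inv_cancel₀ hG.ne'
        have := mul_le_mul_of_nonneg_left hcase hG.le
        linarith
      have hle : w * (1 - w) ≤ w := by nlinarith [mul_le_mul_of_nonneg_left (by linarith : 1 - w ≤ 1) hw0.le]
      have h2 : 1 / w ≤ 1 / (w * (1 - w)) :=
        one_div_le_one_div_of_le hww hle
      have h3 : 0 ≤ ((n:ℝ) - 1) * c / (1 + w * c) :=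
        div_nonneg (mul_nonneg (by linarith) hc.le) h1wc.le
      linarith
    · push_neg at hcase
      have hg := gLB w ⟨hw0, hw1⟩
      have ht0 : (0:ℝ) < ((s + 1) ^ 2)⁻¹ := by positivity
      have e : ((n:ℝ) - 1) / w - ((n:ℝ) - 1) * c / (1 + w * c)
          = ((n:ℝ) - 1) / (w * (1 + w * c)) := by
        rw [div_sub_div _ _ hw0.ne' h1wc.ne', eq_div_iff (by positivity), div_mul_eq_mul_div,
          div_eq_iff (by positivity)]
        ring
      have hwt : (((s + 1) ^ 2)⁻¹) ^ 2 * c ≤ w * (1 + w * c) := by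
        nlinarith [mul_pos (sub_pos.mpr hcase) (by linarith : (0:ℝ) < w + ((s + 1) ^ 2)⁻¹),
          mul_pos hw0 hc]
      have hb : ((n:ℝ) - 1) / (w * (1 + w * c)) ≤ ((n:ℝ) - 1) * (s + 1) ^ 4 / c := by
        rw [div_le_div_iff₀ (by positivity) hc]
        calc ((n:ℝ) - 1) * c
            = (((n:ℝ) - 1) * (s + 1) ^ 4) * ((((s + 1) ^ 2)⁻¹) ^ 2 * c) := by
              field_simp
          _ ≤ (((n:ℝ) - 1) * (s + 1) ^ 4) * (w * (1 + w * c)) :=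
              mul_le_mul_of_nonneg_left hwt (mul_nonneg (by linarith) (by positivity))
          _ = ((n:ℝ) - 1) * (s + 1) ^ 4 * (w * (1 + w * c)) := by ring
      linarith
  -- closed form for the denominator minus constant
  have hDeq : ∀ c : ℝ, 0 < c →
      1 / (W * (1 - W)) + ((n:ℝ) - 1) * c / (1 + W * c)
        = (s + 1) ^ 2 - ((n:ℝ) - 1) / W * (1 + W * c)⁻¹ := by
    intro c hc
    have h1 : (0:ℝ) < 1 + W * c := by nlinarith
    have e1 : ((n:ℝ) - 1) * c / (1 + W * c)
        = ((n:ℝ) - 1) / W - ((n:ℝ) - 1) / W * (1 + W * c)⁻¹ := by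
      field_simp
      ring
    rw [e1, ← hGid]
    ring
  -- the denominator tends to (s+1)^2
  have hDt : Tendsto (fun c : ℝ => 1 / (W * (1 - W)) + ((n:ℝ) - 1) * c / (1 + W * c))
      atTop (nhds ((s + 1) ^ 2)) := by
    have h1 : Tendsto (fun c : ℝ => 1 + W * c) atTop atTop :=
      tendsto_atTop_add_const_left _ 1 (Tendsto.const_mul_atTop hW0 tendsto_id)
    have h2 : Tendsto (fun c : ℝ => (s + 1) ^ 2 - ((n:ℝ) - 1) / W * (1 + W * c)⁻¹)
        atTop (nhds ((s + 1) ^ 2 - ((n:ℝ) - 1) / W * 0)) :=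
      tendsto_const_nhds.sub (tendsto_const_nhds.mul h1.inv_tendsto_atTop)
    rw [mul_zero, sub_zero] at h2
    refine h2.congr' ?_
    filter_upwards [eventually_gt_atTop (0:ℝ)] with c hc
    exact (hDeq c hc).symm
  -- the lower comparison function tends to 1
  have hNt : Tendsto (fun c : ℝ => (s + 1) ^ 2 - ((n:ℝ) - 1) * (s + 1) ^ 4 / c)
      atTop (nhds ((s + 1) ^ 2)) := by
    have h := Tendsto.div_atTop
      (tendsto_const_nhds (x := ((n:ℝ) - 1) * (s + 1) ^ 4) (f := atTop)) tendsto_id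
    simpa using tendsto_const_nhds.sub h
  have hG : (0:ℝ) < (s + 1) ^ 2 := by positivity
  have hLt : Tendsto (fun c : ℝ =>
      ((s + 1) ^ 2 - ((n:ℝ) - 1) * (s + 1) ^ 4 / c) /
        (1 / (W * (1 - W)) + ((n:ℝ) - 1) * c / (1 + W * c))) atTop (nhds 1) := by
    have h := hNt.div hDt hG.ne'
    rwa [div_self hG.ne'] at h
  refine tendsto_of_tendsto_of_tendsto_of_le_of_le' hLt tendsto_const_nhds ?_ ?_
  · filter_upwards [eventually_gt_atTop (0:ℝ)] with c hc
    have hDpos : 0 < 1 / (W * (1 - W)) + ((n:ℝ) - 1) * c / (1 + W * c) := hpos c hc W hWmem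
    have hIge : (s + 1) ^ 2 - ((n:ℝ) - 1) * (s + 1) ^ 4 / c ≤
        ⨅ w : Set.Ioo (0:ℝ) 1,
          (1 / ((w : ℝ) * (1 - (w : ℝ))) + ((n : ℝ) - 1) * c / (1 + (w : ℝ) * c)) :=
      le_ciInf fun w => hlow c hc w w.2
    exact (div_le_div_iff_of_pos_right hDpos).mpr hIge
  · filter_upwards [eventually_gt_atTop (0:ℝ)] with c hc
    have hDpos : 0 < 1 / (W * (1 - W)) + ((n:ℝ) - 1) * c / (1 + W * c) := hpos c hc W hWmem
    have hbdd : BddBelow (Set.range fun w : Set.Ioo (0:ℝ) 1 =>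
        1 / ((w : ℝ) * (1 - (w : ℝ))) + ((n : ℝ) - 1) * c / (1 + (w : ℝ) * c)) := by
      refine ⟨0, ?_⟩
      rintro x ⟨w, rfl⟩
      exact (hpos c hc w w.2).le
    have hIle : (⨅ w : Set.Ioo (0:ℝ) 1,
        (1 / ((w : ℝ) * (1 - (w : ℝ))) + ((n : ℝ) - 1) * c / (1 + (w : ℝ) * c))) ≤
        1 / (W * (1 - W)) + ((n:ℝ) - 1) * c / (1 + W * c) :=
      ciInf_le hbdd ⟨W, hWmem⟩
    exact (div_le_one hDpos).mpr hIle
end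

section
/- Let n ≥ 2 be a natural number and define C₁ : (0,1/2) → ℝ by C₁(w) = (10w+3)/(30·w·(1−2w)) + 1/(6w) + (n−1)/(10w). Then w* = (3n + 5 − 2√(6n+10))/(6(n−1)) lies in (0,1/2) and is the unique minimizer of C₁ on (0,1/2); that is, C₁(w*) < C₁(w) for every w ∈ (0,1/2) with w ≠ w*. -/
/-!
Over the common denominator `30 w (1 - 2w)` the criterion is `(a - b w) / (30 w (1 - 2w))` with
`a = 3n + 5`, `b = 6(n - 1)`, and its critical points solve `2b w² - 4a w + a = 0`. At such a
root `u` the difference of numerators after cross-multiplying is exactly `2 (a - b u) (w - u)²`,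
so `u` is a strict global minimizer on `(0, 1/2)` as soon as `a - b u > 0`. For the smaller root
`w*` one has `a - b w* = 2√(6n + 10) > 0`.
-/

open Real Set

namespace QuadraticRegression

noncomputable def criterion (N w : ℝ) : ℝ :=
  (10 * w + 3) / (30 * w * (1 - 2 * w)) + 1 / (6 * w) + (N - 1) / (10 * w)

theorem criterion_eq_div (N : ℝ) {w : ℝ} (hw : w ≠ 0) (hw' : 1 - 2 * w ≠ 0) :
    criterion N w = (3 * N + 5 - 6 * (N - 1) * w) / (30 * w * (1 - 2 * w)) := by
  rw [criterion, div_add_div _ _ (by positivity) (by positivity),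
    div_add_div _ _ (by positivity) (by positivity), div_eq_div_iff (by positivity) (by positivity)]
  ring

theorem cross_sub_eq_of_critical {a b u : ℝ} (hu : 2 * b * u ^ 2 - 4 * a * u + a = 0) (w : ℝ) :
    (a - b * w) * (u * (1 - 2 * u)) - (a - b * u) * (w * (1 - 2 * w)) =
      2 * (a - b * u) * (w - u) ^ 2 := by
  linear_combination (u - w) * hu

theorem div_lt_div_of_critical {a b c u w : ℝ} (hu : 2 * b * u ^ 2 - 4 * a * u + a = 0)
    (hpos : 0 < a - b * u) (hc : 0 < c) (hu_mem : u ∈ Ioo (0 : ℝ) (1 / 2))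
    (hw_mem : w ∈ Ioo (0 : ℝ) (1 / 2)) (hwu : w ≠ u) :
    (a - b * u) / (c * u * (1 - 2 * u)) < (a - b * w) / (c * w * (1 - 2 * w)) := by
  obtain ⟨hu0, hu1⟩ := hu_mem
  obtain ⟨hw0, hw1⟩ := hw_mem
  have hDu : 0 < u * (1 - 2 * u) := mul_pos hu0 (by linarith)
  have hDw : 0 < w * (1 - 2 * w) := mul_pos hw0 (by linarith)
  have hsq : 0 < (w - u) ^ 2 := sq_pos_of_ne_zero (sub_ne_zero.2 hwu)
  rw [mul_assoc, mul_assoc, div_lt_div_iff₀ (mul_pos hc hDu) (mul_pos hc hDw)]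
  have key := cross_sub_eq_of_critical hu w
  nlinarith [mul_pos hc (mul_pos hpos hsq)]

variable {N : ℝ}

/-- The smaller root `(a - 2√(2a)) / b` of `2b w² - 4a w + a`, for `a = 3N + 5`, `b = 6(N - 1)`. -/
noncomputable def minimizer (N : ℝ) : ℝ :=
  (3 * N + 5 - 2 * √(6 * N + 10)) / (6 * (N - 1))

theorem sq_sqrt_six_mul_add_ten (hN : 1 < N) : √(6 * N + 10) ^ 2 = 6 * N + 10 :=
  sq_sqrt (by linarith)

theorem four_lt_sqrt_six_mul_add_ten (hN : 1 < N) : 4 < √(6 * N + 10) :=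
  lt_sqrt_of_sq_lt (by linarith)

theorem minimizer_mem_Ioo (hN : 1 < N) : minimizer N ∈ Ioo (0 : ℝ) (1 / 2) := by
  have hs := sq_sqrt_six_mul_add_ten hN
  have hs4 := four_lt_sqrt_six_mul_add_ten hN
  have hb : 0 < 6 * (N - 1) := by linarith
  constructor
  · exact div_pos (by nlinarith) hb
  · rw [minimizer, div_lt_iff₀ hb]
    linarith

theorem mul_minimizer (hN : 1 < N) :
    6 * (N - 1) * minimizer N = 3 * N + 5 - 2 * √(6 * N + 10) :=
  mul_div_cancel₀ _ (by linarith)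

theorem minimizer_isCritical (hN : 1 < N) :
    2 * (6 * (N - 1)) * minimizer N ^ 2 - 4 * (3 * N + 5) * minimizer N + (3 * N + 5) = 0 := by
  have hb : 6 * (N - 1) ≠ 0 := by linarith
  refine (mul_eq_zero.1 ?_).resolve_left hb
  linear_combination (2 * (6 * (N - 1) * minimizer N) - 2 * (3 * N + 5) - 4 * √(6 * N + 10)) *
    mul_minimizer hN + 8 * sq_sqrt_six_mul_add_ten hN

theorem numerator_at_minimizer_pos (hN : 1 < N) : 0 < 3 * N + 5 - 6 * (N - 1) * minimizer N := by
  rw [mul_minimizer hN]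
  linarith [four_lt_sqrt_six_mul_add_ten hN]

end QuadraticRegression

open QuadraticRegression

/-- Quadratic regression, Case 1: unique minimizer of
C₁(w) = (10w+3)/(30w(1-2w)) + 1/(6w) + (n-1)/(10w) on (0,1/2). -/
theorem stmt_6 (n : ℕ) (hn : 2 ≤ n) :
    (3*(n:ℝ) + 5 - 2 * Real.sqrt (6*(n:ℝ) + 10)) / (6 * ((n:ℝ) - 1)) ∈
        Set.Ioo (0:ℝ) (1/2) ∧
    ∀ w ∈ Set.Ioo (0:ℝ) (1/2),
      w ≠ (3*(n:ℝ) + 5 - 2 * Real.sqrt (6*(n:ℝ) + 10)) / (6 * ((n:ℝ) - 1)) →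
      (fun w : ℝ => (10*w + 3) / (30 * w * (1 - 2*w)) + 1 / (6*w) + ((n:ℝ) - 1) / (10*w))
          ((3*(n:ℝ) + 5 - 2 * Real.sqrt (6*(n:ℝ) + 10)) / (6 * ((n:ℝ) - 1))) <
        (fun w : ℝ => (10*w + 3) / (30 * w * (1 - 2*w)) + 1 / (6*w) + ((n:ℝ) - 1) / (10*w)) w := by
  have hN : (1 : ℝ) < n := by exact_mod_cast hn
  have hu : minimizer n ∈ Ioo (0 : ℝ) (1 / 2) := minimizer_mem_Ioo hN
  refine ⟨hu, fun w hw hwu => ?_⟩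
  show criterion n (minimizer n) < criterion n w
  rw [criterion_eq_div _ hu.1.ne' (by linarith [hu.2]),
    criterion_eq_div _ hw.1.ne' (by linarith [hw.2])]
  exact div_lt_div_of_critical (minimizer_isCritical hN) (numerator_at_minimizer_pos hN)
    (by norm_num) hu hw hwu
end

section
/- Let n ≥ 2 be a natural number and define C₂ : (0,1/2) → ℝ by C₂(w) = (10w+3)/(30·w·(1−2w)) + 1/(6w) + (n−1)/(6w). Then w* = (5n + 3 − 2√(10n+6))/(10(n−1)) lies in (0,1/2) and is the unique minimizer of C₂ on (0,1/2); that is, C₂(w*) < C₂(w) for every w ∈ (0,1/2) with w ≠ w*. -/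
/-!
Over a common denominator, `C₂(w) = (a - b w) / (w (1 - 2w))` with `a = (5n+3)/30` and
`b = (n-1)/3`. If `W ≠ 0` is a root of `2bW² - 4aW + a`, then with `c = a / (2W²)` one has
`a - b v = c v (1 - 2v) + 2c (v - W)²`, so `C₂(v) = c + 2c (v - W)² / (v (1 - 2v))`
on `(0, 1/2)`, which is strictly minimized at `v = W`. The stated `w*` is the smaller root
of that quadratic.
-/

open Set

section QuadraticRoot

variable {a b W : ℝ}

theorem affine_eq_of_quadratic_root (hW : W ≠ 0) (hroot : 2*b*W^2 - 4*a*W + a = 0) (v : ℝ) :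
    a - b*v = a/(2*W^2) * (v*(1-2*v)) + a/W^2 * (v-W)^2 := by
  field_simp
  linear_combination (-v) * hroot

theorem affine_div_eq_add_sq_div (hW : W ≠ 0) (hroot : 2*b*W^2 - 4*a*W + a = 0) {v : ℝ}
    (hv : v*(1-2*v) ≠ 0) :
    (a - b*v)/(v*(1-2*v)) = a/(2*W^2) + a/W^2 * (v-W)^2/(v*(1-2*v)) := by
  rw [affine_eq_of_quadratic_root hW hroot v, add_div, mul_div_cancel_right₀ _ hv]

theorem affine_div_lt_of_quadratic_root (ha : 0 < a) (hW : W ∈ Ioo 0 (1/2))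
    (hroot : 2*b*W^2 - 4*a*W + a = 0) {v : ℝ} (hv : v ∈ Ioo 0 (1/2)) (hne : v ≠ W) :
    (a - b*W)/(W*(1-2*W)) < (a - b*v)/(v*(1-2*v)) := by
  have hW0 : W ≠ 0 := hW.1.ne'
  have hpos : ∀ u ∈ Ioo (0:ℝ) (1/2), 0 < u*(1-2*u) :=
    fun u hu => mul_pos hu.1 (by linarith [hu.2])
  rw [affine_div_eq_add_sq_div hW0 hroot (hpos W hW).ne',
    affine_div_eq_add_sq_div hW0 hroot (hpos v hv).ne', sub_self, zero_pow two_ne_zero, mul_zero,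
    zero_div, add_zero, lt_add_iff_pos_right]
  have hsq : v - W ≠ 0 := sub_ne_zero.mpr hne
  exact div_pos (mul_pos (div_pos ha (by positivity)) (by positivity)) (hpos v hv)

end QuadraticRoot

theorem case2_criterion_eq (N : ℝ) {w : ℝ} (hw : w ∈ Ioo 0 (1/2)) :
    (10*w + 3) / (30 * w * (1 - 2*w)) + 1 / (6*w) + (N - 1) / (6*w)
      = ((5*N + 3)/30 - (N - 1)/3 * w) / (w * (1 - 2*w)) := by
  have h1 : w ≠ 0 := hw.1.ne'
  have h2 : 1 - w*2 ≠ 0 := by linarith [hw.2]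
  field_simp
  ring

theorem case2_optimum_mem_Ioo {N : ℝ} (hN : 1 < N) :
    (5*N + 3 - 2 * Real.sqrt (10*N + 6)) / (10 * (N - 1)) ∈ Ioo (0:ℝ) (1/2) := by
  have hs4 : 4 < Real.sqrt (10*N + 6) := by
    rw [Real.lt_sqrt (by norm_num)]; linarith
  have hs_lt : 2 * Real.sqrt (10*N + 6) < 5*N + 3 := by
    nlinarith [Real.sq_sqrt (show 0 ≤ 10*N + 6 by linarith), Real.sqrt_nonneg (10*N + 6)]
  have hb : 0 < 10 * (N - 1) := by linarith
  constructor
  · exact div_pos (by linarith) hb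
  · rw [div_lt_iff₀ hb]; linarith

theorem case2_optimum_isRoot {N : ℝ} (hN : 1 < N) :
    2 * ((N - 1)/3) * ((5*N + 3 - 2 * Real.sqrt (10*N + 6)) / (10 * (N - 1)))^2
      - 4 * ((5*N + 3)/30) * ((5*N + 3 - 2 * Real.sqrt (10*N + 6)) / (10 * (N - 1)))
      + (5*N + 3)/30 = 0 := by
  set s := Real.sqrt (10*N + 6)
  have hs : s ^ 2 = 10*N + 6 := Real.sq_sqrt (by linarith)
  have hb : N - 1 ≠ 0 := by linarith
  field_simp
  linear_combination 240 * hs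

/-- Quadratic regression, Case 2: unique minimizer of
C₂(w) = (10w+3)/(30w(1-2w)) + 1/(6w) + (n-1)/(6w) on (0,1/2). -/
theorem stmt_7 (n : ℕ) (hn : 2 ≤ n) :
    (5*(n:ℝ) + 3 - 2 * Real.sqrt (10*(n:ℝ) + 6)) / (10 * ((n:ℝ) - 1)) ∈
        Set.Ioo (0:ℝ) (1/2) ∧
    ∀ w ∈ Set.Ioo (0:ℝ) (1/2),
      w ≠ (5*(n:ℝ) + 3 - 2 * Real.sqrt (10*(n:ℝ) + 6)) / (10 * ((n:ℝ) - 1)) →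
      (fun w : ℝ => (10*w + 3) / (30 * w * (1 - 2*w)) + 1 / (6*w) + ((n:ℝ) - 1) / (6*w))
          ((5*(n:ℝ) + 3 - 2 * Real.sqrt (10*(n:ℝ) + 6)) / (10 * ((n:ℝ) - 1))) <
        (fun w : ℝ => (10*w + 3) / (30 * w * (1 - 2*w)) + 1 / (6*w) + ((n:ℝ) - 1) / (6*w)) w := by
  have hN : (1:ℝ) < n := by exact_mod_cast hn
  have hopt := case2_optimum_mem_Ioo hN
  refine ⟨hopt, fun w hw hne => ?_⟩
  dsimp only
  rw [case2_criterion_eq _ hopt, case2_criterion_eq _ hw]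
  exact affine_div_lt_of_quadratic_root (by positivity) hopt (case2_optimum_isRoot hN) hw hne
end

section
/- Let w ∈ (0,1/2), let M_w be the 3×3 real matrix [[1,0,2w],[0,2w,0],[2w,0,2w]], and let V be the 3×3 real matrix [[1,0,1/3],[0,1/3,0],[1/3,0,1/5]]. Then for any sequences (aₖ), (bₖ), (cₖ) of positive reals with aₖ → 0, bₖ → 0 and cₖ → ∞, one has tr( (M_w + diag(aₖ,bₖ,cₖ))⁻¹ V ) → 1 + 1/(6w). -/
/-!
The matrix `M_w + diag(a, b, c)` only couples the coordinates 1 and 3, so its inverse is explicit: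
the middle coordinate contributes `1 / (3 (2w + b)) → 1 / (6w)` to the trace, and the (1,3) block
contributes `(s - 4w/3 + (1 + a)/5) / ((1 + a) s - 4w²)` with `s = 2w + c`. Dividing numerator and
denominator by `s → ∞` shows that this tends to `1`. The closed form is only needed eventually,
once the determinants are nonzero.
-/

open Filter Topology Matrix

section Checkerboard

variable {K : Type*} [Field K]

theorem inv_fin_three_checkerboard {p q q' r s : K} (hD : p * s - q * q' ≠ 0) (hr : r ≠ 0) :
    (!![p, 0, q; 0, r, 0; q', 0, s] : Matrix (Fin 3) (Fin 3) K)⁻¹ =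
      !![s / (p * s - q * q'), 0, -q / (p * s - q * q'); 0, 1 / r, 0;
        -q' / (p * s - q * q'), 0, p / (p * s - q * q')] := by
  apply inv_eq_right_inv
  rw [mul_fin_three, one_fin_three]
  ring_nf
  field_simp

theorem trace_inv_mul_fin_three_checkerboard {p q q' r s e f f' g h : K}
    (hD : p * s - q * q' ≠ 0) (hr : r ≠ 0) :
    ((!![p, 0, q; 0, r, 0; q', 0, s] : Matrix (Fin 3) (Fin 3) K)⁻¹ *
        !![e, 0, f; 0, g, 0; f', 0, h]).trace =
      (s * e - q * f' - q' * f + p * h) / (p * s - q * q') + g / r := by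
  rw [inv_fin_three_checkerboard hD hr, mul_fin_three, trace_fin_three]
  simp only [of_apply, cons_val]
  ring

theorem checkerboard_add_diagonal (p q q' r s x y z : K) :
    (!![p, 0, q; 0, r, 0; q', 0, s] : Matrix (Fin 3) (Fin 3) K) + diagonal ![x, y, z] =
      !![p + x, 0, q; 0, r + y, 0; q', 0, s + z] := by
  ext i j
  fin_cases i <;> fin_cases j <;> simp

end Checkerboard

theorem Filter.Tendsto.mul_sub_div_atTop {ι 𝕜 : Type*} [Field 𝕜] [LinearOrder 𝕜]
    [IsStrictOrderedRing 𝕜] [TopologicalSpace 𝕜] [OrderTopology 𝕜] {l : Filter ι}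
    {p v s : ι → 𝕜} {p₀ v₀ : 𝕜}
    (hp : Tendsto p l (𝓝 p₀)) (hv : Tendsto v l (𝓝 v₀)) (hs : Tendsto s l atTop) :
    Tendsto (fun k => (p k * s k - v k) / s k) l (𝓝 p₀) := by
  have hlim : Tendsto (fun k => p k - v k / s k) l (𝓝 p₀) := by
    simpa using hp.sub (hv.div_atTop hs)
  refine hlim.congr' ?_
  filter_upwards [hs.eventually_ne_atTop 0] with k hk
  field_simp

theorem stmt_8_general (w : ℝ) (hw : w ∈ Set.Ioo (0:ℝ) (1/2))
    (a b c : ℕ → ℝ)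
    (ha : Filter.Tendsto a Filter.atTop (nhds 0))
    (hb : Filter.Tendsto b Filter.atTop (nhds 0))
    (hc : Filter.Tendsto c Filter.atTop Filter.atTop) :
    Filter.Tendsto
      (fun k =>
        ((((!![1, 0, 2*w; 0, 2*w, 0; 2*w, 0, 2*w] : Matrix (Fin 3) (Fin 3) ℝ) +
            Matrix.diagonal ![a k, b k, c k])⁻¹) *
          (!![1, 0, 1/3; 0, 1/3, 0; 1/3, 0, 1/5] : Matrix (Fin 3) (Fin 3) ℝ)).trace)
      Filter.atTop (nhds (1 + 1 / (6*w))) := by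
  have h2w : 2 * w ≠ 0 := mul_ne_zero two_ne_zero hw.1.ne'
  set s := fun k => 2 * w + c k
  set D := fun k => (1 + a k) * s k - 2 * w * (2 * w)
  set N := fun k => s k * 1 - 2 * w * (1 / 3) - 2 * w * (1 / 3) + (1 + a k) * (1 / 5)
  have hs : Tendsto s atTop atTop := tendsto_atTop_add_const_left _ _ hc
  have ha1 : Tendsto (fun k => 1 + a k) atTop (𝓝 1) := by simpa using ha.const_add 1
  have hDs : Tendsto (fun k => D k / s k) atTop (𝓝 1) :=
    ha1.mul_sub_div_atTop tendsto_const_nhds hs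
  have hNs : Tendsto (fun k => N k / s k) atTop (𝓝 1) := by
    refine (tendsto_const_nhds.mul_sub_div_atTop
      ((tendsto_const_nhds (x := 4 * w / 3)).sub (ha1.div_const 5)) hs).congr fun k => ?_
    simp only [N]
    ring
  have hr : Tendsto (fun k => 2 * w + b k) atTop (𝓝 (2 * w)) := by
    simpa using hb.const_add (2 * w)
  have hlim := (hNs.div hDs one_ne_zero).add
    ((tendsto_const_nhds (x := (1 / 3 : ℝ))).div hr h2w)
  rw [show (1 : ℝ) / 1 + 1 / 3 / (2 * w) = 1 + 1 / (6 * w) by ring] at hlim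
  refine hlim.congr' ?_
  filter_upwards [hDs.eventually_ne one_ne_zero, hs.eventually_ne_atTop 0,
    hr.eventually_ne h2w] with k hD hs0 hr0
  rw [checkerboard_add_diagonal, trace_inv_mul_fin_three_checkerboard (left_ne_zero_of_mul hD) hr0,
    Pi.div_apply, Pi.div_apply, div_div_div_cancel_right₀ hs0]

/-- Quadratic regression, Case 3 limit: a,b → 0, c → ∞ gives
tr((M_w + diag(a,b,c))⁻¹ V) → 1 + 1/(6w). -/
theorem stmt_8 (w : ℝ) (hw : w ∈ Set.Ioo (0:ℝ) (1/2))
    (a b c : ℕ → ℝ) (ha0 : ∀ k, 0 < a k) (hb0 : ∀ k, 0 < b k) (hc0 : ∀ k, 0 < c k)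
    (ha : Filter.Tendsto a Filter.atTop (nhds 0))
    (hb : Filter.Tendsto b Filter.atTop (nhds 0))
    (hc : Filter.Tendsto c Filter.atTop Filter.atTop) :
    Filter.Tendsto
      (fun k =>
        ((((!![1, 0, 2*w; 0, 2*w, 0; 2*w, 0, 2*w] : Matrix (Fin 3) (Fin 3) ℝ) +
            Matrix.diagonal ![a k, b k, c k])⁻¹) *
          (!![1, 0, 1/3; 0, 1/3, 0; 1/3, 0, 1/5] : Matrix (Fin 3) (Fin 3) ℝ)).trace)
      Filter.atTop (nhds (1 + 1 / (6*w))) :=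
  stmt_8_general w hw a b c ha hb hc
end

section
/- Let n ≥ 2 be a natural number and define C₃ : (0,1/2) → ℝ by C₃(w) = (10w+3)/(30·w·(1−2w)) + 1/(6w) + (n−1)·(1 + 1/(6w)). Then w* = (5n + 3 − 2√(10n+6))/(10(n−1)) lies in (0,1/2) and is the unique minimizer of C₃ on (0,1/2); in particular, Case 3 yields the same minimax-optimal weight as Case 2. -/
/-!
Partial fractions turn the criterion into `C₃(w) = (n - 1) + ((5n+3)/(2w) + 8/(1-2w)) / 15`,
so with `u = 2w` it is an affine image of `s²/u + t²/(1-u)`, where `s = √(5n+3)` and `t = √8`.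
The latter exceeds its minimum `(s+t)²` by `(s(1-u) - tu)² / (u(1-u))`, which vanishes only at
`u = s/(s+t)`. Rationalising `s/(2(s+t))` gives the weight of the statement.
-/

open Set

theorem sq_div_add_sq_div_one_sub_eq (s t : ℝ) {u : ℝ} (hu : u ≠ 0) (hu' : 1 - u ≠ 0) :
    s ^ 2 / u + t ^ 2 / (1 - u) = (s + t) ^ 2 + (s * (1 - u) - t * u) ^ 2 / (u * (1 - u)) := by
  field_simp
  ring

theorem sq_div_add_sq_div_one_sub_strictMinOn {s t : ℝ} (hs : 0 < s) (ht : 0 < t) :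
    s / (s + t) ∈ Ioo (0 : ℝ) 1 ∧
      ∀ u ∈ Ioo (0 : ℝ) 1, u ≠ s / (s + t) →
        s ^ 2 / (s / (s + t)) + t ^ 2 / (1 - s / (s + t)) < s ^ 2 / u + t ^ 2 / (1 - u) := by
  have hst : 0 < s + t := by positivity
  have hmem : s / (s + t) ∈ Ioo (0 : ℝ) 1 :=
    ⟨by positivity, (div_lt_one hst).2 (by linarith)⟩
  have hmin : s ^ 2 / (s / (s + t)) + t ^ 2 / (1 - s / (s + t)) = (s + t) ^ 2 := by
    rw [sq_div_add_sq_div_one_sub_eq s t hmem.1.ne' (sub_pos.2 hmem.2).ne']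
    field_simp
    ring
  refine ⟨hmem, fun u ⟨hu0, hu1⟩ hne => ?_⟩
  have hgap : s * (1 - u) - t * u ≠ 0 := by
    contrapose! hne
    field_simp
    linarith
  rw [hmin, sq_div_add_sq_div_one_sub_eq s t hu0.ne' (sub_pos.2 hu1).ne']
  have hexcess : 0 < (s * (1 - u) - t * u) ^ 2 / (u * (1 - u)) :=
    div_pos (by positivity) (mul_pos hu0 (sub_pos.2 hu1))
  linarith

theorem case3_criterion_eq (m : ℝ) {w : ℝ} (hw : w ≠ 0) (hw' : 1 - 2 * w ≠ 0) :
    (10 * w + 3) / (30 * w * (1 - 2 * w)) + 1 / (6 * w) + (m - 1) * (1 + 1 / (6 * w)) =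
      m - 1 + ((5 * m + 3) / (2 * w) + 8 / (1 - 2 * w)) / 15 := by
  rw [mul_comm 2 w] at *
  field_simp
  ring

theorem case3_weight_eq {m : ℝ} (hm : 1 < m) :
    (5 * m + 3 - 2 * √(10 * m + 6)) / (10 * (m - 1)) =
      √(5 * m + 3) / (√(5 * m + 3) + √8) / 2 := by
  have hs : √(5 * m + 3) ^ 2 = 5 * m + 3 := Real.sq_sqrt (by linarith)
  have h8 : √8 = 2 * √2 := by
    rw [show (8 : ℝ) = 2 ^ 2 * 2 by norm_num, Real.sqrt_mul' _ zero_le_two,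
      Real.sqrt_sq zero_le_two]
  have h2 : √2 ^ 2 = 2 := Real.sq_sqrt zero_le_two
  have hprod : √(10 * m + 6) = √2 * √(5 * m + 3) := by
    rw [← Real.sqrt_mul zero_le_two]; ring_nf
  rw [hprod, h8, div_div,
    div_eq_div_iff (by linarith : (0 : ℝ) < 10 * (m - 1)).ne' (by positivity)]
  linear_combination (-4 * √2) * hs - 8 * √(5 * m + 3) * h2

/-- Quadratic regression, Case 3: unique minimizer of
C₃(w) = (10w+3)/(30w(1-2w)) + 1/(6w) + (n-1)(1 + 1/(6w)) on (0,1/2) is the same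
weight (5n+3-2√(10n+6))/(10(n-1)) as in Case 2. -/
theorem stmt_9 (n : ℕ) (hn : 2 ≤ n) :
    (5*(n:ℝ) + 3 - 2 * Real.sqrt (10*(n:ℝ) + 6)) / (10 * ((n:ℝ) - 1)) ∈
        Set.Ioo (0:ℝ) (1/2) ∧
    ∀ w ∈ Set.Ioo (0:ℝ) (1/2),
      w ≠ (5*(n:ℝ) + 3 - 2 * Real.sqrt (10*(n:ℝ) + 6)) / (10 * ((n:ℝ) - 1)) →
      (fun w : ℝ => (10*w + 3) / (30 * w * (1 - 2*w)) + 1 / (6*w) +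
            ((n:ℝ) - 1) * (1 + 1 / (6*w)))
          ((5*(n:ℝ) + 3 - 2 * Real.sqrt (10*(n:ℝ) + 6)) / (10 * ((n:ℝ) - 1))) <
        (fun w : ℝ => (10*w + 3) / (30 * w * (1 - 2*w)) + 1 / (6*w) +
            ((n:ℝ) - 1) * (1 + 1 / (6*w))) w := by
  have hm : (1 : ℝ) < n := by exact_mod_cast hn
  obtain ⟨⟨hu0, hu1⟩, hmin⟩ :=
    sq_div_add_sq_div_one_sub_strictMinOn (s := √(5 * (n : ℝ) + 3)) (t := √8)
      (by positivity) (by positivity)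
  rw [Real.sq_sqrt (by positivity), Real.sq_sqrt (by norm_num)] at hmin
  rw [case3_weight_eq hm]
  set u := √(5 * (n : ℝ) + 3) / (√(5 * (n : ℝ) + 3) + √8)
  refine ⟨⟨by linarith, by linarith⟩, fun w ⟨hw0, hw1⟩ hne => ?_⟩
  dsimp only
  rw [case3_criterion_eq _ (by linarith) (by linarith), case3_criterion_eq _ hw0.ne' (by linarith),
    mul_div_cancel₀ u two_ne_zero]
  have := hmin (2 * w) ⟨by linarith, by linarith⟩ (by contrapose! hne; linarith)
  linarith
end

section
/- Let w ∈ (0,1/2), let M_w be the 3×3 real matrix [[1,0,2w],[0,2w,0],[2w,0,2w]], and let V be the 3×3 real matrix [[1,0,1/3],[0,1/3,0],[1/3,0,1/5]]. Then for any sequences (aₖ), (bₖ), (cₖ) of positive reals with aₖ → 0, bₖ → ∞ and cₖ → 0, one has tr( (M_w + diag(aₖ,bₖ,cₖ))⁻¹ V ) → (10w+3)/(30·w·(1−2w)). -/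
/-!
The matrix `M_w + diag(a, b, c)` only couples the coordinates `0` and `2`, so its inverse splits
into the inverse of the `2 × 2` block `[[1 + a, 2w], [2w, 2w + c]]` and the scalar `1 / (2w + b)`.
The scalar part contributes `V₁₁ / (2w + b) → 0`, while the block converges to `[[1, 2w], [2w, 2w]]`,
whose determinant `2w(1 - 2w)` is nonzero for `0 < w < 1/2`; the limit is then read off by continuity.
-/

open Filter Topology

namespace Matrix

theorem add_diagonal_fin_three {α : Type*} [AddZeroClass α]
    (m₀₀ m₀₁ m₀₂ m₁₀ m₁₁ m₁₂ m₂₀ m₂₁ m₂₂ a b c : α) :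
    !![m₀₀, m₀₁, m₀₂; m₁₀, m₁₁, m₁₂; m₂₀, m₂₁, m₂₂] + diagonal ![a, b, c] =
      !![m₀₀ + a, m₀₁, m₀₂; m₁₀, m₁₁ + b, m₁₂; m₂₀, m₂₁, m₂₂ + c] := by
  ext i j
  fin_cases i <;> fin_cases j <;> simp

variable {K : Type*} [Field K]

theorem inv_fin_three_checkerboard (p q r s : K) (hD : p * s - q ^ 2 ≠ 0) (hr : r ≠ 0) :
    !![p, 0, q; 0, r, 0; q, 0, s]⁻¹ =
      !![s / (p * s - q ^ 2), 0, -q / (p * s - q ^ 2); 0, r⁻¹, 0;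
        -q / (p * s - q ^ 2), 0, p / (p * s - q ^ 2)] := by
  apply inv_eq_right_inv
  rw [mul_fin_three, one_fin_three]
  congr! <;> field_simp <;> ring

theorem trace_inv_fin_three_checkerboard_mul (p q r s : K) (hD : p * s - q ^ 2 ≠ 0) (hr : r ≠ 0)
    (V : Matrix (Fin 3) (Fin 3) K) :
    (!![p, 0, q; 0, r, 0; q, 0, s]⁻¹ * V).trace =
      (s * V 0 0 - q * (V 0 2 + V 2 0) + p * V 2 2) / (p * s - q ^ 2) + V 1 1 / r := by
  rw [inv_fin_three_checkerboard p q r s hD hr, trace_fin_three]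
  simp only [mul_apply, of_apply, cons_val', cons_val_fin_one, cons_val_zero, cons_val_one,
    cons_val, Fin.sum_univ_three, zero_mul, add_zero, zero_add]
  field_simp
  ring

end Matrix

theorem Filter.Tendsto.trace_inv_fin_three_checkerboard_mul {K ι : Type*} [Field K] [LinearOrder K]
    [IsStrictOrderedRing K] [TopologicalSpace K] [OrderTopology K] {l : Filter ι}
    {p q r s : ι → K} {p₀ q₀ s₀ : K} (hp : Tendsto p l (𝓝 p₀)) (hq : Tendsto q l (𝓝 q₀))
    (hr : Tendsto r l atTop) (hs : Tendsto s l (𝓝 s₀)) (hD : p₀ * s₀ - q₀ ^ 2 ≠ 0)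
    (V : Matrix (Fin 3) (Fin 3) K) :
    Tendsto (fun i => (!![p i, 0, q i; 0, r i, 0; q i, 0, s i]⁻¹ * V).trace) l
      (𝓝 ((s₀ * V 0 0 - q₀ * (V 0 2 + V 2 0) + p₀ * V 2 2) / (p₀ * s₀ - q₀ ^ 2))) := by
  have hdet : Tendsto (fun i => p i * s i - q i ^ 2) l (𝓝 (p₀ * s₀ - q₀ ^ 2)) :=
    (hp.mul hs).sub (hq.pow 2)
  have hnum : Tendsto (fun i => s i * V 0 0 - q i * (V 0 2 + V 2 0) + p i * V 2 2) l
      (𝓝 (s₀ * V 0 0 - q₀ * (V 0 2 + V 2 0) + p₀ * V 2 2)) :=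
    ((hs.mul_const _).sub (hq.mul_const _)).add (hp.mul_const _)
  have hlim := (hnum.div hdet hD).add ((tendsto_const_nhds (x := V 1 1)).div_atTop hr)
  rw [add_zero] at hlim
  refine hlim.congr' ?_
  filter_upwards [hdet.eventually_ne hD, hr.eventually_ne_atTop 0] with i hDi hri
  exact (Matrix.trace_inv_fin_three_checkerboard_mul _ _ _ _ hDi hri V).symm

theorem stmt_10_general (w : ℝ) (hw : w ∈ Set.Ioo (0:ℝ) (1/2))
    (a b c : ℕ → ℝ)
    (ha : Filter.Tendsto a Filter.atTop (nhds 0))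
    (hb : Filter.Tendsto b Filter.atTop Filter.atTop)
    (hc : Filter.Tendsto c Filter.atTop (nhds 0)) :
    Filter.Tendsto
      (fun k =>
        ((((!![1, 0, 2*w; 0, 2*w, 0; 2*w, 0, 2*w] : Matrix (Fin 3) (Fin 3) ℝ) +
            Matrix.diagonal ![a k, b k, c k])⁻¹) *
          (!![1, 0, 1/3; 0, 1/3, 0; 1/3, 0, 1/5] : Matrix (Fin 3) (Fin 3) ℝ)).trace)
      Filter.atTop (nhds ((10*w + 3) / (30 * w * (1 - 2*w)))) := by
  obtain ⟨hw₀, hw₁⟩ := hw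
  simp only [Matrix.add_diagonal_fin_three]
  convert (tendsto_const_nhds.add ha).trace_inv_fin_three_checkerboard_mul tendsto_const_nhds
    (tendsto_atTop_add_const_left _ _ hb) (tendsto_const_nhds.add hc) ?_ _ using 2
  · simp only [Matrix.of_apply, Matrix.cons_val', Matrix.cons_val_zero, Matrix.cons_val_one,
      Matrix.cons_val, Matrix.cons_val_fin_one, add_zero]
    field_simp
    ring
  · nlinarith

/-- Quadratic regression, Case 4 limit: a → 0, b → ∞, c → 0 gives
tr((M_w + diag(a,b,c))⁻¹ V) → (10w+3)/(30w(1-2w)). -/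
theorem stmt_10 (w : ℝ) (hw : w ∈ Set.Ioo (0:ℝ) (1/2))
    (a b c : ℕ → ℝ) (ha0 : ∀ k, 0 < a k) (hb0 : ∀ k, 0 < b k) (hc0 : ∀ k, 0 < c k)
    (ha : Filter.Tendsto a Filter.atTop (nhds 0))
    (hb : Filter.Tendsto b Filter.atTop Filter.atTop)
    (hc : Filter.Tendsto c Filter.atTop (nhds 0)) :
    Filter.Tendsto
      (fun k =>
        ((((!![1, 0, 2*w; 0, 2*w, 0; 2*w, 0, 2*w] : Matrix (Fin 3) (Fin 3) ℝ) +
            Matrix.diagonal ![a k, b k, c k])⁻¹) *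
          (!![1, 0, 1/3; 0, 1/3, 0; 1/3, 0, 1/5] : Matrix (Fin 3) (Fin 3) ℝ)).trace)
      Filter.atTop (nhds ((10*w + 3) / (30 * w * (1 - 2*w)))) :=
  stmt_10_general w hw a b c ha hb hc
end

section
/- Let n ≥ 2 be a natural number and define C₄ : (0,1/2) → ℝ by C₄(w) = n·(10w+3)/(30·w·(1−2w)) + 1/(6w). Then w* = (−3n − 5 + 2√(6n² + 10n))/(10(n−1)) lies in (0,1/2) and is the unique minimizer of C₄ on (0,1/2); that is, C₄(w*) < C₄(w) for every w ∈ (0,1/2) with w ≠ w*. -/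
/-!
Over a common denominator the criterion is `C₄(w) = (a w + b) / (w (1 - 2w))` with
`a = (n - 1)/3 > 0` and `b = (3n + 5)/30 > 0`. Its critical points are the roots of
`2a w² + 4b w - b`, and for such a root `t` one has the exact identity
`(a w + b) t (1 - 2t) - (a t + b) w (1 - 2w) = 2 (a t + b) (w - t)²`,
so `t` is a strict global minimiser on `(0, 1/2)`. The weight `w*` is the positive root.
-/

open Real Set

theorem div_lt_div_of_isCriticalPoint {a b t w : ℝ} (ht : t ∈ Ioo (0 : ℝ) (1 / 2))
    (hw : w ∈ Ioo (0 : ℝ) (1 / 2)) (hpos : 0 < a * t + b)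
    (hcrit : 2 * a * t ^ 2 + 4 * b * t - b = 0) (hne : w ≠ t) :
    (a * t + b) / (t * (1 - 2 * t)) < (a * w + b) / (w * (1 - 2 * w)) := by
  obtain ⟨ht0, ht1⟩ := ht
  obtain ⟨hw0, hw1⟩ := hw
  have hdt : 0 < t * (1 - 2 * t) := mul_pos ht0 (by linarith)
  have hdw : 0 < w * (1 - 2 * w) := mul_pos hw0 (by linarith)
  have hgap : 0 < (w - t) ^ 2 := by
    have := sub_ne_zero.mpr hne
    positivity
  have key : (a * w + b) * (t * (1 - 2 * t)) - (a * t + b) * (w * (1 - 2 * w))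
      = 2 * (a * t + b) * (w - t) ^ 2 + (w - t) * (2 * a * t ^ 2 + 4 * b * t - b) := by
    ring
  rw [hcrit, mul_zero, add_zero] at key
  rw [div_lt_div_iff₀ hdt hdw]
  linarith [mul_pos hpos hgap]

noncomputable section

def designCriterion (n w : ℝ) : ℝ :=
  n * (10 * w + 3) / (30 * w * (1 - 2 * w)) + 1 / (6 * w)

def optimalWeight (n : ℝ) : ℝ :=
  (-3 * n - 5 + 2 * √(6 * n ^ 2 + 10 * n)) / (10 * (n - 1))

end

theorem designCriterion_eq {n w : ℝ} (hw : w ∈ Ioo (0 : ℝ) (1 / 2)) :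
    designCriterion n w = ((n - 1) / 3 * w + (3 * n + 5) / 30) / (w * (1 - 2 * w)) := by
  have hw0 : w ≠ 0 := hw.1.ne'
  have hw1 : 1 - 2 * w ≠ 0 := by linarith [hw.2]
  unfold designCriterion
  rw [div_add_div _ _ (by positivity) (by positivity), div_eq_div_iff (by positivity) (by positivity)]
  ring

theorem sq_sqrt_six_mul_sq_add_ten_mul {n : ℝ} (hn : 0 ≤ n) :
    √(6 * n ^ 2 + 10 * n) ^ 2 = 6 * n ^ 2 + 10 * n :=
  sq_sqrt (by positivity)

section optimalWeight

variable {n : ℝ} (hn : 1 < n)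
include hn

theorem optimalWeight_mem_Ioo : optimalWeight n ∈ Ioo (0 : ℝ) (1 / 2) := by
  have hs := sq_sqrt_six_mul_sq_add_ten_mul (by linarith : 0 ≤ n)
  have hs0 := sqrt_nonneg (6 * n ^ 2 + 10 * n)
  have hden : 0 < 10 * (n - 1) := by linarith
  unfold optimalWeight
  constructor
  · -- `4 (6n² + 10n) - (3n + 5)² = 5 (3n + 5)(n - 1) > 0`
    refine div_pos ?_ hden
    nlinarith
  · -- `64 n² - 4 (6n² + 10n) = 40 n (n - 1) > 0`
    rw [div_lt_iff₀ hden]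
    nlinarith

theorem optimalWeight_isCriticalPoint :
    2 * ((n - 1) / 3) * optimalWeight n ^ 2 + 4 * ((3 * n + 5) / 30) * optimalWeight n
      - (3 * n + 5) / 30 = 0 := by
  have hs := sq_sqrt_six_mul_sq_add_ten_mul (by linarith : 0 ≤ n)
  have hn1 : n - 1 ≠ 0 := by linarith
  unfold optimalWeight
  generalize √(6 * n ^ 2 + 10 * n) = s at hs ⊢
  field_simp
  linear_combination 240 * hs

end optimalWeight

/-- Quadratic regression, Case 4: unique minimizer of
C₄(w) = n(10w+3)/(30w(1-2w)) + 1/(6w) on (0,1/2). -/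
theorem stmt_11 (n : ℕ) (hn : 2 ≤ n) :
    (-3*(n:ℝ) - 5 + 2 * Real.sqrt (6*(n:ℝ)^2 + 10*(n:ℝ))) / (10 * ((n:ℝ) - 1)) ∈
        Set.Ioo (0:ℝ) (1/2) ∧
    ∀ w ∈ Set.Ioo (0:ℝ) (1/2),
      w ≠ (-3*(n:ℝ) - 5 + 2 * Real.sqrt (6*(n:ℝ)^2 + 10*(n:ℝ))) / (10 * ((n:ℝ) - 1)) →
      (fun w : ℝ => (n:ℝ) * (10*w + 3) / (30 * w * (1 - 2*w)) + 1 / (6*w))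
          ((-3*(n:ℝ) - 5 + 2 * Real.sqrt (6*(n:ℝ)^2 + 10*(n:ℝ))) / (10 * ((n:ℝ) - 1))) <
        (fun w : ℝ => (n:ℝ) * (10*w + 3) / (30 * w * (1 - 2*w)) + 1 / (6*w)) w := by
  have hn1 : (1 : ℝ) < n := by exact_mod_cast hn
  have hmem := optimalWeight_mem_Ioo hn1
  refine ⟨hmem, fun w hw hne => ?_⟩
  change designCriterion n (optimalWeight n) < designCriterion n w
  rw [designCriterion_eq hmem, designCriterion_eq hw]
  refine div_lt_div_of_isCriticalPoint hmem hw ?_ (optimalWeight_isCriticalPoint hn1) hne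
  have := hmem.1
  have : (0 : ℝ) < n - 1 := by linarith
  positivity
end

section
/- Let w ∈ (0,1/2), let M_w be the 3×3 real matrix [[1,0,2w],[0,2w,0],[2w,0,2w]], and let V be the 3×3 real matrix [[1,0,1/3],[0,1/3,0],[1/3,0,1/5]]. Then for any sequences (aₖ), (bₖ), (cₖ) of positive reals with aₖ → ∞, bₖ → 0 and cₖ → 0, one has tr( (M_w + diag(aₖ,bₖ,cₖ))⁻¹ V ) → 4/(15w). -/
set_option maxHeartbeats 1000000

open Matrix

lemma key_trace (w A B C : ℝ) (hw : 0 < w) (hw2 : w < 1/2)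
    (hA : 0 < A) (hB : 0 < B) (hC : 0 < C) :
    ((((!![1, 0, 2*w; 0, 2*w, 0; 2*w, 0, 2*w] : Matrix (Fin 3) (Fin 3) ℝ) +
        Matrix.diagonal ![A, B, C])⁻¹) *
      (!![1, 0, 1/3; 0, 1/3, 0; 1/3, 0, 1/5] : Matrix (Fin 3) (Fin 3) ℝ)).trace
    = (((2*w + C) - 4*w/3) * (1 + A)⁻¹ + 1/5) / ((2*w + C) - 4*w^2 * (1 + A)⁻¹)
      + 1/(3*(2*w + B)) := by
  have hA1 : (0:ℝ) < 1 + A := by linarith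
  have hD : 0 < (1 + A) * (2*w + C) - 4*w^2 := by nlinarith
  have hwB : (0:ℝ) < 2*w + B := by linarith
  set D := (1 + A) * (2*w + C) - 4*w^2 with hDdef
  have hM : (!![1, 0, 2*w; 0, 2*w, 0; 2*w, 0, 2*w] : Matrix (Fin 3) (Fin 3) ℝ) +
      Matrix.diagonal ![A, B, C] =
      !![1 + A, 0, 2*w; 0, 2*w + B, 0; 2*w, 0, 2*w + C] := by
    ext i j
    fin_cases i <;> fin_cases j <;>
      simp [Matrix.add_apply, Matrix.diagonal] <;> ring
  rw [hM]
  have hinv : (!![1 + A, 0, 2*w; 0, 2*w + B, 0; 2*w, 0, 2*w + C] :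
      Matrix (Fin 3) (Fin 3) ℝ)⁻¹ =
      !![(2*w + C)/D, 0, -(2*w)/D; 0, 1/(2*w + B), 0; -(2*w)/D, 0, (1 + A)/D] := by
    apply Matrix.inv_eq_right_inv
    ext i j
    fin_cases i <;> fin_cases j <;>
      simp [Matrix.mul_apply, Fin.sum_univ_three, Matrix.one_apply] <;>
      field_simp <;> ring
  rw [hinv]
  rw [Matrix.trace_fin_three]
  simp only [Matrix.mul_apply, Fin.sum_univ_three]
  simp only [Matrix.cons_val_zero, Matrix.cons_val_one, Matrix.head_cons, Matrix.cons_val_two,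
    Matrix.tail_cons, Matrix.head_fin_const, Matrix.cons_val', Matrix.empty_val',
    Matrix.cons_val_fin_one, Matrix.of_apply]
  have hE : (2*w + C - 4*w^2*(1+A)⁻¹) = D / (1+A) := by
    rw [hDdef]; field_simp
  rw [hE, div_div_eq_mul_div]
  have hDne := ne_of_gt hD
  have hBne : (2*w+B) ≠ 0 := ne_of_gt hwB
  have hAne : (1+A) ≠ 0 := ne_of_gt hA1
  field_simp
  rw [hDdef]
  ring

/-- Quadratic regression, Case 5 limit: a → ∞, b → 0, c → 0 gives
tr((M_w + diag(a,b,c))⁻¹ V) → 4/(15w). -/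
theorem stmt_12 (w : ℝ) (hw : w ∈ Set.Ioo (0:ℝ) (1/2))
    (a b c : ℕ → ℝ) (ha0 : ∀ k, 0 < a k) (hb0 : ∀ k, 0 < b k) (hc0 : ∀ k, 0 < c k)
    (ha : Filter.Tendsto a Filter.atTop Filter.atTop)
    (hb : Filter.Tendsto b Filter.atTop (nhds 0))
    (hc : Filter.Tendsto c Filter.atTop (nhds 0)) :
    Filter.Tendsto
      (fun k =>
        ((((!![1, 0, 2*w; 0, 2*w, 0; 2*w, 0, 2*w] : Matrix (Fin 3) (Fin 3) ℝ) +
            Matrix.diagonal ![a k, b k, c k])⁻¹) *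
          (!![1, 0, 1/3; 0, 1/3, 0; 1/3, 0, 1/5] : Matrix (Fin 3) (Fin 3) ℝ)).trace)
      Filter.atTop (nhds (4 / (15*w))) := by
  obtain ⟨hw0, hw2⟩ := hw
  set u : ℕ → ℝ := fun k => (1 + a k)⁻¹ with hudef
  have hu : Filter.Tendsto u Filter.atTop (nhds 0) :=
    (Filter.tendsto_atTop_add_const_left _ 1 ha).inv_tendsto_atTop
  have hnum : Filter.Tendsto (fun k => ((2*w + c k) - 4*w/3) * u k + 1/5)
      Filter.atTop (nhds (1/5)) := by
    have h := (((hc.const_add (2*w)).sub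
        (tendsto_const_nhds : Filter.Tendsto (fun _ : ℕ => 4*w/3) _ _)).mul hu).add
      (tendsto_const_nhds : Filter.Tendsto (fun _ : ℕ => (1:ℝ)/5) _ _)
    simpa using h
  have hden : Filter.Tendsto (fun k => (2*w + c k) - 4*w^2 * u k)
      Filter.atTop (nhds (2*w)) := by
    have h := (hc.const_add (2*w)).sub (hu.const_mul (4*w^2))
    simpa using h
  have T1 : Filter.Tendsto
      (fun k => (((2*w + c k) - 4*w/3) * u k + 1/5) / ((2*w + c k) - 4*w^2 * u k))
      Filter.atTop (nhds ((1/5) / (2*w))) :=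
    hnum.div hden (by positivity)
  have h2 : Filter.Tendsto (fun k => 3*(2*w + b k)) Filter.atTop (nhds (3*(2*w))) := by
    have h := (hb.const_add (2*w)).const_mul 3
    simpa using h
  have T2 : Filter.Tendsto (fun k => 1 / (3*(2*w + b k))) Filter.atTop
      (nhds (1 / (3*(2*w)))) :=
    (tendsto_const_nhds : Filter.Tendsto (fun _ : ℕ => (1:ℝ)) _ _).div h2 (by positivity)
  have T := T1.add T2
  have hval : (1/5) / (2*w) + 1 / (3*(2*w)) = 4 / (15*w) := by
    field_simp
    ring
  rw [hval] at T
  refine T.congr fun k => ?_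
  exact (key_trace w (a k) (b k) (c k) hw0 hw2 (ha0 k) (hb0 k) (hc0 k)).symm
end

section
/- Let n ≥ 2 be a natural number and define C₅ : (0,1/2) → ℝ by C₅(w) = (10w+3)/(30·w·(1−2w)) + 1/(6w) + 4(n−1)/(15w). Then w* = (n − √n)/(2(n−1)) lies in (0,1/2) and is the unique minimizer of C₅ on (0,1/2); that is, C₅(w*) < C₅(w) for every w ∈ (0,1/2) with w ≠ w*. -/
/-!
Over the common denominator, `C₅(w) = 4(n - 2(n-1)w) / (15 w (1-2w))`. Writing `n = s²` with
`s = √n`, completing the square gives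
`C₅(w) = 8(s+1)²/15 + 4(2(s+1)w - s)² / (15 w (1-2w))`,
and on `(0,1/2)` the second term is nonnegative and vanishes only at `w = s/(2(s+1))`, which is
`(n - √n)/(2(n-1))`.
-/

open Set

namespace QuadraticRegression

noncomputable def C₅ (n w : ℝ) : ℝ :=
  (10 * w + 3) / (30 * w * (1 - 2 * w)) + 1 / (6 * w) + 4 * (n - 1) / (15 * w)

lemma C₅_sq_eq (s w : ℝ) (hw : w ≠ 0) (hw' : 1 - 2 * w ≠ 0) :
    C₅ (s ^ 2) w = 8 * (s + 1) ^ 2 / 15 + 4 * (2 * (s + 1) * w - s) ^ 2 / (15 * w * (1 - 2 * w)) := by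
  unfold C₅
  rw [div_add_div _ _ (by positivity) (by positivity), div_add_div _ _ (by positivity) (by positivity),
    div_add_div _ _ (by positivity) (by positivity), div_eq_div_iff (by positivity) (by positivity)]
  ring

lemma div_two_mul_add_one_mem_Ioo {s : ℝ} (hs : 0 < s) : s / (2 * (s + 1)) ∈ Ioo (0 : ℝ) (1 / 2) :=
  ⟨by positivity, by rw [div_lt_div_iff₀ (by positivity) two_pos]; linarith⟩

lemma C₅_sq_lt {s w : ℝ} (hs : 0 < s) (hw : w ∈ Ioo (0 : ℝ) (1 / 2)) (hne : w ≠ s / (2 * (s + 1))) :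
    C₅ (s ^ 2) (s / (2 * (s + 1))) < C₅ (s ^ 2) w := by
  obtain ⟨hw₀, hw₁⟩ := hw
  obtain ⟨hm₀, hm₁⟩ := div_two_mul_add_one_mem_Ioo hs
  have hsq : 2 * (s + 1) * w - s ≠ 0 := fun h => hne (by field_simp; linarith)
  have hvanish : 2 * (s + 1) * (s / (2 * (s + 1))) - s = 0 := by field_simp; ring
  have hw₂ : 0 < 1 - 2 * w := by linarith
  rw [C₅_sq_eq s _ hm₀.ne' (by linarith), C₅_sq_eq s w hw₀.ne' hw₂.ne', hvanish,
    zero_pow two_ne_zero, mul_zero, zero_div, add_zero, lt_add_iff_pos_right]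
  positivity

lemma sub_sqrt_div_eq {n : ℝ} (hn : 1 < n) :
    (n - √n) / (2 * (n - 1)) = √n / (2 * (√n + 1)) := by
  have hs : √n ^ 2 = n := Real.sq_sqrt (by linarith)
  rw [div_eq_div_iff (by linarith) (by positivity)]
  linear_combination -2 * hs

end QuadraticRegression

open QuadraticRegression

/-- Quadratic regression, Case 5: unique minimizer of
C₅(w) = (10w+3)/(30w(1-2w)) + 1/(6w) + 4(n-1)/(15w) on (0,1/2). -/
theorem stmt_13 (n : ℕ) (hn : 2 ≤ n) :
    ((n:ℝ) - Real.sqrt n) / (2 * ((n:ℝ) - 1)) ∈ Set.Ioo (0:ℝ) (1/2) ∧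
    ∀ w ∈ Set.Ioo (0:ℝ) (1/2),
      w ≠ ((n:ℝ) - Real.sqrt n) / (2 * ((n:ℝ) - 1)) →
      (fun w : ℝ => (10*w + 3) / (30 * w * (1 - 2*w)) + 1 / (6*w) +
            4 * ((n:ℝ) - 1) / (15*w))
          (((n:ℝ) - Real.sqrt n) / (2 * ((n:ℝ) - 1))) <
        (fun w : ℝ => (10*w + 3) / (30 * w * (1 - 2*w)) + 1 / (6*w) +
            4 * ((n:ℝ) - 1) / (15*w)) w := by
  have hn1 : (1 : ℝ) < n := by exact_mod_cast hn
  have hs : 0 < √(n : ℝ) := by positivity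
  rw [sub_sqrt_div_eq hn1]
  refine ⟨div_two_mul_add_one_mem_Ioo hs, fun w hw hne => ?_⟩
  have hlt := C₅_sq_lt hs hw hne
  rwa [Real.sq_sqrt n.cast_nonneg] at hlt
end

section
/- The map n ↦ (3n + 5 − 2√(6n+10))/(6(n−1)) is strictly increasing on the natural numbers n ≥ 2; that is, for all natural numbers 2 ≤ n < n', (3n + 5 − 2√(6n+10))/(6(n−1)) < (3n' + 5 − 2√(6n'+10))/(6(n'−1)). -/
lemma stmt_14_key (x : ℝ) (hx : 2 ≤ x) :
    (3*x + 5 - 2 * Real.sqrt (6*x + 10)) / (6 * (x - 1)) =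
    Real.sqrt (6*x+10) / (2*(Real.sqrt (6*x+10) + 4)) := by
  set s := Real.sqrt (6*x+10) with hs
  have hnn : (0:ℝ) ≤ 6*x+10 := by linarith
  have hs2 : s^2 = 6*x+10 := Real.sq_sqrt hnn
  have hsnn : 0 ≤ s := Real.sqrt_nonneg _
  have hs4 : 4 < s := by nlinarith
  have h1 : 6*(x-1) = (s-4)*(s+4) := by nlinarith
  have h2 : 3*x+5-2*s = s*(s-4)/2 := by nlinarith
  rw [h1, h2]
  have hne1 : s - 4 ≠ 0 := by linarith
  have hne2 : s + 4 ≠ 0 := by linarith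
  field_simp

/-- The Case 1 minimax-optimal weight (3n+5-2√(6n+10))/(6(n-1)) is strictly
increasing in n ≥ 2. -/
theorem stmt_14 : ∀ n n' : ℕ, 2 ≤ n → n < n' →
    (3*(n:ℝ) + 5 - 2 * Real.sqrt (6*(n:ℝ) + 10)) / (6 * ((n:ℝ) - 1)) <
      (3*(n':ℝ) + 5 - 2 * Real.sqrt (6*(n':ℝ) + 10)) / (6 * ((n':ℝ) - 1)) := by
  intro n n' hn hnn'
  have hx : (2:ℝ) ≤ (n:ℝ) := by exact_mod_cast hn
  have hxy : (n:ℝ) < (n':ℝ) := by exact_mod_cast hnn'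
  have hy : (2:ℝ) ≤ (n':ℝ) := by linarith
  rw [stmt_14_key _ hx, stmt_14_key _ hy]
  set s := Real.sqrt (6*(n:ℝ)+10)
  set t := Real.sqrt (6*(n':ℝ)+10)
  have hsnn : 0 ≤ s := Real.sqrt_nonneg _
  have hst : s < t := by
    apply Real.sqrt_lt_sqrt (by linarith) (by linarith)
  rw [div_lt_div_iff₀ (by linarith) (by linarith)]
  nlinarith
end

section
/- The map n ↦ (−3n − 5 + 2√(6n² + 10n))/(10(n−1)) is strictly decreasing on the natural numbers n ≥ 2; that is, for all natural numbers 2 ≤ n < n', (−3n − 5 + 2√(6n² + 10n))/(10(n−1)) > (−3n' − 5 + 2√(6n'² + 10n'))/(10(n'−1)). -/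
lemma fform (x : ℝ) (hx : 2 ≤ x) :
    (-3*x - 5 + 2 * Real.sqrt (6*x^2 + 10*x)) / (10 * (x - 1)) =
      (3*x + 5) / (2 * (2 * Real.sqrt (6*x^2 + 10*x) + 3*x + 5)) := by
  set s := Real.sqrt (6*x^2 + 10*x) with hsdef
  have hs0 : 0 ≤ s := Real.sqrt_nonneg _
  have hs : s^2 = 6*x^2 + 10*x := Real.sq_sqrt (by nlinarith)
  rw [div_eq_div_iff (by linarith) (by nlinarith)]
  linear_combination 8 * hs

/-- The Case 4 minimax-optimal weight (-3n-5+2√(6n²+10n))/(10(n-1)) is strictly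
decreasing in n ≥ 2. -/
theorem stmt_16 : ∀ n n' : ℕ, 2 ≤ n → n < n' →
    (-3*(n':ℝ) - 5 + 2 * Real.sqrt (6*(n':ℝ)^2 + 10*(n':ℝ))) / (10 * ((n':ℝ) - 1)) <
      (-3*(n:ℝ) - 5 + 2 * Real.sqrt (6*(n:ℝ)^2 + 10*(n:ℝ))) / (10 * ((n:ℝ) - 1)) := by
  intro n n' hn hnn'
  set a := (n : ℝ) with ha
  set b := (n' : ℝ) with hb
  have ha2 : (2:ℝ) ≤ a := by rw [ha]; exact_mod_cast hn
  have hab : a < b := by rw [ha, hb]; exact_mod_cast hnn'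
  have hb2 : (2:ℝ) ≤ b := le_of_lt (lt_of_le_of_lt ha2 hab)
  rw [fform a ha2, fform b hb2]
  set sa := Real.sqrt (6*a^2 + 10*a) with hsadef
  set sb := Real.sqrt (6*b^2 + 10*b) with hsbdef
  have hsa0 : 0 ≤ sa := Real.sqrt_nonneg _
  have hsb0 : 0 ≤ sb := Real.sqrt_nonneg _
  have hsa : sa^2 = 6*a^2 + 10*a := Real.sq_sqrt (by nlinarith)
  have hsb : sb^2 = 6*b^2 + 10*b := Real.sq_sqrt (by nlinarith)
  have key : (3*b + 5) * sa < (3*a + 5) * sb := by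
    have hsq : ((3*b + 5) * sa)^2 < ((3*a + 5) * sb)^2 := by
      have h1 : ((3*b + 5) * sa)^2 = (3*b+5)^2 * (6*a^2 + 10*a) := by
        rw [mul_pow, hsa]
      have h2 : ((3*a + 5) * sb)^2 = (3*a+5)^2 * (6*b^2 + 10*b) := by
        rw [mul_pow, hsb]
      rw [h1, h2]
      nlinarith [mul_pos (show (0:ℝ) < 3*a+5 by linarith) (show (0:ℝ) < 3*b+5 by linarith),
        mul_pos (mul_pos (show (0:ℝ) < 3*a+5 by linarith) (show (0:ℝ) < 3*b+5 by linarith))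
          (show (0:ℝ) < b - a by linarith)]
    exact lt_of_pow_lt_pow_left₀ 2 (by positivity) hsq
  rw [div_lt_div_iff₀ (by nlinarith) (by nlinarith)]
  nlinarith [key]
end
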